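/- arXiv:math/0702675 — 4 statements merged into one kernel-verified Lean document; each statement's English description precedes it below -/
import Mathlib

section
/- In any bounded quasisemilattice, any finite nonempty set of elements has only finitely many maximal lower bounds, and every common lower bound of the set lies below some maximal lower bound. -/
/-!
Induction on `S`. A lower bound of `insert a S` is a common lower bound of `a` and of some maximal
lower bound `m` of `S`, hence lies below one of the finitely many maximal lower bounds of `a, m`.
These form a finite family of lower bounds of `insert a S` that is cofinal among them, and a finite
cofinal subset contains every maximal element and has every element below a maximal one.
-/

/-- The set of maximal lower bounds of `p` and `q` in a poset. -/
def MLB {α : Type*} [PartialOrder α] (p q : α) : Set α :=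
  {r | r ≤ p ∧ r ≤ q ∧ ∀ s : α, s ≤ p → s ≤ q → r ≤ s → r = s}

/-- A quasisemilattice: every pair of elements has finitely many maximal lower
bounds, and every common lower bound lies below one of them. -/
def IsQSL (α : Type*) [PartialOrder α] : Prop :=
  ∀ p q : α, (MLB p q).Finite ∧ ∀ r : α, r ≤ p → r ≤ q → ∃ s ∈ MLB p q, r ≤ s

open Set

section

variable {α : Type*} [PartialOrder α]

def HasFiniteMaximals (s : Set α) : Prop :=
  {x | Maximal (· ∈ s) x}.Finite ∧ ∀ x ∈ s, ∃ m, Maximal (· ∈ s) m ∧ x ≤ m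

theorem HasFiniteMaximals.of_finite_cofinal {s T : Set α} (hT : T.Finite) (hTs : T ⊆ s)
    (hcof : ∀ x ∈ s, ∃ t ∈ T, x ≤ t) : HasFiniteMaximals s := by
  refine ⟨hT.subset fun m hm => ?_, fun x hx => ?_⟩
  · obtain ⟨t, ht, hmt⟩ := hcof m hm.prop
    rwa [hm.eq_of_le (hTs ht) hmt]
  · obtain ⟨t₀, ht₀, hxt₀⟩ := hcof x hx
    obtain ⟨b, ht₀b, hb⟩ := (hT.subset (sep_subset T (x ≤ ·))).exists_le_maximal
      (show t₀ ∈ {t ∈ T | x ≤ t} from ⟨ht₀, hxt₀⟩)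
    refine ⟨b, ⟨hTs hb.prop.1, fun y hy hby => ?_⟩, hxt₀.trans ht₀b⟩
    obtain ⟨t, ht, hyt⟩ := hcof y hy
    exact hyt.trans (hb.2 ⟨ht, hb.prop.2.trans (hby.trans hyt)⟩ (hby.trans hyt))

theorem hasFiniteMaximals_Iic (a : α) : HasFiniteMaximals (Iic a) :=
  .of_finite_cofinal (finite_singleton a) (singleton_subset_iff.2 le_rfl)
    fun _ hx => ⟨a, rfl, hx⟩

theorem HasFiniteMaximals.inter {s t : Set α} (hs : IsLowerSet s) (hsm : HasFiniteMaximals s)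
    (ht : ∀ m, Maximal (· ∈ s) m → HasFiniteMaximals (t ∩ Iic m)) :
    HasFiniteMaximals (t ∩ s) := by
  refine .of_finite_cofinal (T := ⋃ m ∈ {m | Maximal (· ∈ s) m}, {x | Maximal (· ∈ t ∩ Iic m) x})
    (hsm.1.biUnion fun m hm => (ht m hm).1) ?_ fun x ⟨hxt, hxs⟩ => ?_
  · simp only [iUnion_subset_iff]
    exact fun m hm x hx => ⟨hx.prop.1, hs hx.prop.2 hm.prop⟩
  · obtain ⟨m, hm, hxm⟩ := hsm.2 x hxs
    obtain ⟨n, hn, hxn⟩ := (ht m hm).2 x ⟨hxt, hxm⟩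
    exact ⟨n, mem_biUnion hm hn, hxn⟩

theorem MLB_eq_setOf_maximal (p q : α) : MLB p q = {x | Maximal (· ∈ Iic p ∩ Iic q) x} := by
  ext x
  simp [MLB, maximal_iff, and_assoc]

theorem IsQSL.hasFiniteMaximals_Iic_inter_Iic (hq : IsQSL α) (p q : α) :
    HasFiniteMaximals (Iic p ∩ Iic q) := by
  obtain ⟨hfin, hcof⟩ := hq p q
  simp only [MLB_eq_setOf_maximal, mem_ofPred_eq] at hfin hcof
  exact ⟨hfin, fun x hx => hcof x hx.1 hx.2⟩

theorem IsQSL.hasFiniteMaximals_lowerBounds (hq : IsQSL α) {S : Finset α} (hS : S.Nonempty) :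
    HasFiniteMaximals (lowerBounds (S : Set α)) := by
  induction hS using Finset.Nonempty.cons_induction with
  | singleton a => simpa using hasFiniteMaximals_Iic a
  | cons a S _ _ ih =>
    rw [Finset.coe_cons, lowerBounds_insert]
    exact ih.inter (fun _ _ hba hb _ hc => hba.trans (hb hc))
      fun m _ => hq.hasFiniteMaximals_Iic_inter_Iic a m

end

theorem stmt_1_general {α : Type*} [PartialOrder α] (hq : IsQSL α)
    (S : Finset α) (hS : S.Nonempty) :
    {r : α | (∀ p ∈ S, r ≤ p) ∧
        ∀ s : α, (∀ p ∈ S, s ≤ p) → r ≤ s → r = s}.Finite ∧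
    ∀ r : α, (∀ p ∈ S, r ≤ p) →
      ∃ s, ((∀ p ∈ S, s ≤ p) ∧ ∀ t : α, (∀ p ∈ S, t ≤ p) → s ≤ t → s = t) ∧
        r ≤ s := by
  obtain ⟨hfin, hcof⟩ := hq.hasFiniteMaximals_lowerBounds hS
  refine ⟨hfin.subset fun r hr => maximal_iff.2 hr, fun r hr => ?_⟩
  obtain ⟨m, hm, hrm⟩ := hcof r fun p hp => hr p hp
  exact ⟨m, maximal_iff.1 hm, hrm⟩

/-- In a bounded quasisemilattice, any finite nonempty set of elements has only
finitely many maximal lower bounds, and every common lower bound of the set lies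
below some maximal lower bound. -/
theorem stmt_1 {α : Type*} [PartialOrder α] [OrderBot α] (hq : IsQSL α)
    (S : Finset α) (hS : S.Nonempty) :
    {r : α | (∀ p ∈ S, r ≤ p) ∧
        ∀ s : α, (∀ p ∈ S, s ≤ p) → r ≤ s → r = s}.Finite ∧
    ∀ r : α, (∀ p ∈ S, r ≤ p) →
      ∃ s, ((∀ p ∈ S, s ≤ p) ∧ ∀ t : α, (∀ p ∈ S, t ≤ p) → s ≤ t → s = t) ∧
        r ≤ s :=
  stmt_1_general hq S hS
end

section
/- In a Kripke model for intuitionistic propositional logic, let φ be a formula and α a node whose immediate successors are β₁, ..., βₘ. Suppose the set {Type_φ(βᵢ) : 1 ≤ i ≤ m} of sets of subformulas of φ forced at the βᵢ has a minimum element T under inclusion, and suppose that for every atomic formula x in φ, α forces x iff x ∈ T. Then for every subformula ψ of φ, α forces ψ iff ψ ∈ T. -/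
/-- Propositional formulas with atoms in `α`. -/
inductive PropForm (α : Type) : Type
  | var : α → PropForm α
  | bot : PropForm α
  | conj : PropForm α → PropForm α → PropForm α
  | disj : PropForm α → PropForm α → PropForm α
  | impl : PropForm α → PropForm α → PropForm α
  deriving DecidableEq

/-- Kripke forcing over a preordered set of worlds `W` with atomic valuation
`val` (standard clauses for intuitionistic propositional logic). -/
def Force {W α : Type} [Preorder W] (val : W → α → Prop) :
    W → PropForm α → Prop
  | w, .var a => val w a
  | _, .bot => False
  | w, .conj p q => Force val w p ∧ Force val w q
  | w, .disj p q => Force val w p ∨ Force val w q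
  | w, .impl p q => ∀ w', w ≤ w' → Force val w' p → Force val w' q

/-- The atomic valuation is monotone. -/
def MonoVal {W α : Type} [Preorder W] (val : W → α → Prop) : Prop :=
  ∀ a : α, ∀ w w' : W, w ≤ w' → val w a → val w' a

/-- The set of subformulas of a formula. -/
def Subform {α : Type} [DecidableEq α] : PropForm α → Finset (PropForm α)
  | .var a => {PropForm.var a}
  | .bot => {PropForm.bot}
  | .conj p q => insert (PropForm.conj p q) (Subform p ∪ Subform q)
  | .disj p q => insert (PropForm.disj p q) (Subform p ∪ Subform q)
  | .impl p q => insert (PropForm.impl p q) (Subform p ∪ Subform q)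

lemma self_mem_subform {α : Type} [DecidableEq α] (ψ : PropForm α) :
    ψ ∈ Subform ψ := by
  cases ψ <;> simp [Subform]

lemma subform_trans {α : Type} [DecidableEq α] (φ ψ : PropForm α)
    (h : ψ ∈ Subform φ) : Subform ψ ⊆ Subform φ := by
  induction φ with
  | var a => simp [Subform] at h; subst h; simp [Subform]
  | bot => simp [Subform] at h; subst h; simp [Subform]
  | conj p q ihp ihq =>
      simp [Subform] at h
      rcases h with h | h | h
      · subst h; exact Finset.Subset.refl _
      · exact (ihp h).trans (fun x hx => Finset.mem_insert_of_mem (Finset.mem_union_left _ hx))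
      · exact (ihq h).trans (fun x hx => Finset.mem_insert_of_mem (Finset.mem_union_right _ hx))
  | disj p q ihp ihq =>
      simp [Subform] at h
      rcases h with h | h | h
      · subst h; exact Finset.Subset.refl _
      · exact (ihp h).trans (fun x hx => Finset.mem_insert_of_mem (Finset.mem_union_left _ hx))
      · exact (ihq h).trans (fun x hx => Finset.mem_insert_of_mem (Finset.mem_union_right _ hx))
  | impl p q ihp ihq =>
      simp [Subform] at h
      rcases h with h | h | h
      · subst h; exact Finset.Subset.refl _
      · exact (ihp h).trans (fun x hx => Finset.mem_insert_of_mem (Finset.mem_union_left _ hx))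
      · exact (ihq h).trans (fun x hx => Finset.mem_insert_of_mem (Finset.mem_union_right _ hx))

/-- Lemma `hypfails`: if `α₀` has immediate successors `β 0, …, β m`, the set of
their `φ`-types has a minimum element `T` under inclusion, and `α₀` forces
exactly the atomic subformulas of `φ` lying in `T`, then `α₀` forces exactly the
subformulas of `φ` lying in `T`. -/
theorem stmt_4 {W α : Type} [DecidableEq α] [PartialOrder W]
    (val : W → α → Prop) (hmono : MonoVal val)
    (φ : PropForm α) (α₀ : W) (m : ℕ) (β : Fin m → W)
    -- the `β i` are exactly the immediate successors of `α₀`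
    (hsucc : ∀ i, α₀ ⋖ β i)
    (hall : ∀ γ : W, α₀ ⋖ γ → ∃ i, γ = β i)
    -- every node strictly above `α₀` is above some immediate successor
    (habove : ∀ γ : W, α₀ < γ → ∃ i, β i ≤ γ)
    (T : Set (PropForm α))
    -- `T` is the minimum of the types of the `β i` under inclusion
    (hmem : ∃ i, T = {ψ | ψ ∈ Subform φ ∧ Force val (β i) ψ})
    (hmin : ∀ i, T ⊆ {ψ | ψ ∈ Subform φ ∧ Force val (β i) ψ})
    -- `α₀` forces an atomic subformula of `φ` iff it lies in `T`
    (hatom : ∀ a : α, PropForm.var a ∈ Subform φ →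
      (Force val α₀ (PropForm.var a) ↔ PropForm.var a ∈ T)) :
    ∀ ψ ∈ Subform φ, Force val α₀ ψ ↔ ψ ∈ T := by
  obtain ⟨i₀, hT⟩ := hmem
  have hle : ∀ i, α₀ ≤ β i := fun i => (hsucc i).1.le
  intro ψ
  induction ψ with
  | var a => exact fun h => hatom a h
  | bot =>
      intro _
      constructor
      · intro h; exact absurd h (by simp [Force])
      · intro h; exact absurd ((hmin i₀ h).2) (by simp [Force])
  | conj p q ihp ihq =>
      intro h
      have hp : p ∈ Subform φ := subform_trans φ _ h (Finset.mem_insert_of_mem (Finset.mem_union_left _ (self_mem_subform p)))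
      have hq : q ∈ Subform φ := subform_trans φ _ h (Finset.mem_insert_of_mem (Finset.mem_union_right _ (self_mem_subform q)))
      constructor
      · rintro ⟨h1, h2⟩
        rw [hT]
        refine ⟨h, ?_, ?_⟩
        · exact ((hmin i₀ (hT ▸ (ihp hp).mp h1)).2)
        · exact ((hmin i₀ (hT ▸ (ihq hq).mp h2)).2)
      · intro hmem
        have := (hmin i₀ hmem).2
        obtain ⟨h1, h2⟩ := this
        exact ⟨(ihp hp).mpr (hT ▸ ⟨hp, h1⟩), (ihq hq).mpr (hT ▸ ⟨hq, h2⟩)⟩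
  | disj p q ihp ihq =>
      intro h
      have hp : p ∈ Subform φ := subform_trans φ _ h (Finset.mem_insert_of_mem (Finset.mem_union_left _ (self_mem_subform p)))
      have hq : q ∈ Subform φ := subform_trans φ _ h (Finset.mem_insert_of_mem (Finset.mem_union_right _ (self_mem_subform q)))
      constructor
      · rintro (h1 | h1)
        · rw [hT]; exact ⟨h, Or.inl (hmin i₀ (hT ▸ (ihp hp).mp h1)).2⟩
        · rw [hT]; exact ⟨h, Or.inr (hmin i₀ (hT ▸ (ihq hq).mp h1)).2⟩
      · intro hmem
        rcases (hmin i₀ hmem).2 with h1 | h1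
        · exact Or.inl ((ihp hp).mpr (hT ▸ ⟨hp, h1⟩))
        · exact Or.inr ((ihq hq).mpr (hT ▸ ⟨hq, h1⟩))
  | impl p q ihp ihq =>
      intro h
      have hp : p ∈ Subform φ := subform_trans φ _ h (Finset.mem_insert_of_mem (Finset.mem_union_left _ (self_mem_subform p)))
      have hq : q ∈ Subform φ := subform_trans φ _ h (Finset.mem_insert_of_mem (Finset.mem_union_right _ (self_mem_subform q)))
      constructor
      · intro hf
        rw [hT]
        exact ⟨h, fun w' hw' hpw' => hf w' ((hle i₀).trans hw') hpw'⟩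
      · intro hmem
        intro w' hw' hpw'
        rcases eq_or_lt_of_le hw' with rfl | hlt
        · -- w' = α₀
          have hpT : p ∈ T := (ihp hp).mp hpw'
          have := (hmin i₀ hmem).2 (β i₀) le_rfl (hmin i₀ hpT).2
          exact (ihq hq).mpr (hT ▸ ⟨hq, this⟩)
        · obtain ⟨i, hi⟩ := habove w' hlt
          exact (hmin i hmem).2 w' hi hpw'
end

section
/- The free Heyting algebra on one generator (the Rieger–Nishimura lattice) contains, besides ⊥ and ⊤, exactly the elements φᵢ and ψᵢ defined by φ₁ = ¬x, ψ₁ = x, φ_{i+1} = φᵢ → ψᵢ, ψ_{i+1} = φᵢ ∨ ψᵢ; that is, every propositional formula in one variable x is intuitionistically equivalent to exactly one formula among ⊥, ⊤, the φᵢ, and the ψᵢ. -/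
/-- Intuitionistic equivalence of one-variable formulas, characterized
semantically (by soundness and completeness of Kripke semantics): `φ` and `ψ`
are equivalent iff they are forced at the same nodes in every Kripke model. -/
def IEquiv (φ ψ : PropForm Unit) : Prop :=
  ∀ (W : Type) [Preorder W] (val : W → Unit → Prop), MonoVal val →
    ∀ w : W, Force val w φ ↔ Force val w ψ

/-- The Rieger–Nishimura formulas: `RN i = (φ_{i+1}, ψ_{i+1})` where
`φ₁ = ¬x`, `ψ₁ = x`, `φ_{i+1} = φ_i → ψ_i`, `ψ_{i+1} = φ_i ∨ ψ_i`. -/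
def RN : ℕ → PropForm Unit × PropForm Unit
  | 0 => ((PropForm.var ()).impl .bot, PropForm.var ())
  | i + 1 => ((RN i).1.impl (RN i).2, (RN i).1.disj (RN i).2)

/-- An enumeration of `⊥`, `⊤`, and the Rieger–Nishimura formulas `φ_i, ψ_i`. -/
def RNenum : ℕ → PropForm Unit
  | 0 => PropForm.bot
  | 1 => PropForm.bot.impl PropForm.bot
  | k + 2 => if k % 2 = 0 then (RN (k / 2)).1 else (RN (k / 2)).2

theorem force_mono {W α : Type} [Preorder W] {val : W → α → Prop} (hv : MonoVal val) :
    ∀ (p : PropForm α) {w w' : W}, w ≤ w' → Force val w p → Force val w' p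
  | .var a, _, _, h, hf => hv a _ _ h hf
  | .bot, _, _, _, hf => hf.elim
  | .conj p q, _, _, h, hf => ⟨force_mono hv p h hf.1, force_mono hv q h hf.2⟩
  | .disj p q, _, _, h, hf => hf.imp (force_mono hv p h) (force_mono hv q h)
  | .impl _ _, _, _, h, hf => fun _ h' hp => hf _ (h.trans h') hp

theorem force_iff_of_boundedMorphism {W V α : Type} [Preorder W] [Preorder V]
    {val : W → α → Prop} {val' : V → α → Prop} (f : W → V)
    (hval : ∀ w a, val w a ↔ val' (f w) a) (hmono : Monotone f)
    (hback : ∀ w v, f w ≤ v → ∃ w', w ≤ w' ∧ f w' = v) :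
    ∀ (p : PropForm α) (w : W), Force val w p ↔ Force val' (f w) p
  | .var a, w => hval w a
  | .bot, _ => Iff.rfl
  | .conj p q, w => and_congr (force_iff_of_boundedMorphism f hval hmono hback p w)
      (force_iff_of_boundedMorphism f hval hmono hback q w)
  | .disj p q, w => or_congr (force_iff_of_boundedMorphism f hval hmono hback p w)
      (force_iff_of_boundedMorphism f hval hmono hback q w)
  | .impl p q, w => by
    have ihp := force_iff_of_boundedMorphism f hval hmono hback p
    have ihq := force_iff_of_boundedMorphism f hval hmono hback q
    constructor
    · intro h v hv hp
      obtain ⟨w', hw', rfl⟩ := hback w v hv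
      exact (ihq w').1 (h w' hw' ((ihp w').2 hp))
    · intro h w' hw' hp
      exact (ihq w').2 (h (f w') (hmono hw') ((ihp w').1 hp))

section RiegerNishimura

variable {W : Type} [Preorder W] {val : W → Unit → Prop}

theorem force_psi_succ_of_psi {w : W} {n : ℕ} (h : Force val w (RN n).2) :
    Force val w (RN (n + 1)).2 :=
  Or.inr h

theorem force_psi_succ_of_phi {w : W} {n : ℕ} (h : Force val w (RN n).1) :
    Force val w (RN (n + 1)).2 :=
  Or.inl h

theorem force_phi_succ_of_psi (hv : MonoVal val) {w : W} {n : ℕ}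
    (h : Force val w (RN n).2) : Force val w (RN (n + 1)).1 :=
  fun _ hw _ => force_mono hv _ hw h

theorem not_force_phi_zero_of_psi_zero {w : W} (h : Force val w (RN 0).2) :
    ¬ Force val w (RN 0).1 :=
  fun hφ => hφ w le_rfl h

theorem force_psi_of_phi_succ_of_psi_succ {w : W} {n : ℕ} (hφ : Force val w (RN (n + 1)).1)
    (hψ : Force val w (RN (n + 1)).2) : Force val w (RN n).2 :=
  hψ.elim (hφ w le_rfl) id

theorem force_psi_mono {w : W} {n m : ℕ} (hnm : n ≤ m) (h : Force val w (RN n).2) :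
    Force val w (RN m).2 := by
  induction m, hnm using Nat.le_induction with
  | base => exact h
  | succ m _ ih => exact force_psi_succ_of_psi ih

variable (val) in
noncomputable def rnDepth (w : W) : ℕ∞ :=
  open Classical in
  if h : ∃ n, Force val w (RN n).2 then (Nat.find h : ℕ∞) else ⊤

theorem rnDepth_le_iff (w : W) (n : ℕ) : rnDepth val w ≤ n ↔ Force val w (RN n).2 := by
  classical
  unfold rnDepth
  split_ifs with h
  · rw [Nat.cast_le, Nat.find_le_iff]
    exact ⟨fun ⟨m, hm, hf⟩ => force_psi_mono hm hf, fun hf => ⟨n, le_rfl, hf⟩⟩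
  · simp only [top_le_iff, ENat.natCast_ne_top, false_iff]
    exact fun hf => h ⟨n, hf⟩

theorem force_phi_iff_rnDepth (hv : MonoVal val) (w : W) (n : ℕ) :
    Force val w (RN n).1 ↔ rnDepth val w = n + 1 ∨ rnDepth val w < n := by
  have key := rnDepth_le_iff (val := val) w
  generalize rnDepth val w = d at key
  induction d using ENat.recTopCoe with
  | top =>
    simp only [top_le_iff, ENat.natCast_ne_top, false_iff] at key
    refine iff_of_false (key (n + 1) ∘ force_psi_succ_of_phi) ?_
    simpa using (ENat.natCast_ne_top (n + 1)).symm
  | coe j =>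
    simp only [Nat.cast_le] at key
    norm_cast
    constructor
    · intro hφ
      have hj : j ≤ n + 1 := (key _).2 (force_psi_succ_of_phi hφ)
      rcases n with _ | n
      · have : ¬ j ≤ 0 := fun h => not_force_phi_zero_of_psi_zero ((key 0).1 h) hφ
        omega
      · by_cases hjn : j = n + 1 + 1
        · exact Or.inl hjn
        · have := (key n).2 <| force_psi_of_phi_succ_of_psi_succ hφ ((key _).1 (by omega))
          omega
    · rintro (rfl | hj)
      · exact ((key _).1 le_rfl).resolve_right fun h => by simpa using (key n).2 h
      · obtain ⟨n, rfl⟩ : ∃ m, n = m + 1 := ⟨n - 1, by omega⟩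
        exact force_phi_succ_of_psi hv ((key n).1 (by omega))

end RiegerNishimura

/-- The Rieger–Nishimura ladder: rung `m` sees itself and the rungs `≤ m - 2`, `x` holds only at
rung `0`, and an extra point `⊤` sees every rung. -/
structure Ladder : Type where
  depth : ℕ∞

namespace Ladder

instance : Preorder Ladder where
  le a b := a.depth = b.depth ∨ b.depth + 2 ≤ a.depth
  le_refl _ := Or.inl rfl
  le_trans a b c := by
    rintro (hab | hab) (hbc | hbc)
    · exact Or.inl (hab.trans hbc)
    · exact Or.inr (hab ▸ hbc)
    · exact Or.inr (hbc ▸ hab)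
    · exact Or.inr (hbc.trans (le_self_add.trans hab))

theorem le_iff {a b : Ladder} : a ≤ b ↔ a.depth = b.depth ∨ b.depth + 2 ≤ a.depth := Iff.rfl

theorem top_le (t : Ladder) : (⟨⊤⟩ : Ladder) ≤ t := Or.inr le_top

theorem forall_iff {P : Ladder → Prop} : (∀ t, P t) ↔ P ⟨⊤⟩ ∧ ∀ m : ℕ, P ⟨m⟩ := by
  refine ⟨fun h => ⟨h _, fun _ => h _⟩, fun ⟨htop, hm⟩ ⟨d⟩ => ?_⟩
  induction d using ENat.recTopCoe with
  | top => exact htop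
  | coe m => exact hm m

def val (t : Ladder) (_ : Unit) : Prop := t.depth = 0

theorem monoVal_val : MonoVal val := by
  rintro _ t s (h | h) (ht : t.depth = 0)
  · exact (h.symm.trans ht : s.depth = 0)
  · simp [ht] at h

theorem forall_le_depth_ne_iff (t : Ladder) (m : ℕ∞) :
    (∀ s, t ≤ s → s.depth ≠ m) ↔ ¬ (t.depth = m ∨ m + 2 ≤ t.depth) :=
  ⟨fun h hle => h ⟨m⟩ hle rfl, fun h _ hs hsm => h (hsm ▸ le_iff.1 hs)⟩

theorem force_rn (n : ℕ) (t : Ladder) :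
    (Force val t (RN n).1 ↔ t.depth = n + 1 ∨ t.depth < n) ∧
      (Force val t (RN n).2 ↔ t.depth ≤ n) := by
  induction n generalizing t with
  | zero =>
    refine ⟨(forall_le_depth_ne_iff t 0).trans ?_, nonpos_iff_eq_zero.symm⟩
    induction t.depth using ENat.recTopCoe with
    | top => simp [eq_comm (a := (⊤ : ℕ∞))]
    | coe d => norm_cast; omega
  | succ n ih =>
    have hstep (s : Ladder) :
        (Force val s (RN n).1 → Force val s (RN n).2) ↔ s.depth ≠ ↑(n + 1) := by
      rw [(ih s).1, (ih s).2]
      induction s.depth using ENat.recTopCoe with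
      | top => simp [eq_comm (a := (⊤ : ℕ∞))]
      | coe d => norm_cast; omega
    constructor
    · calc Force val t (RN (n + 1)).1 ↔ ∀ s, t ≤ s → s.depth ≠ ↑(n + 1) :=
            forall₂_congr fun s _ => hstep s
        _ ↔ _ := forall_le_depth_ne_iff t _
        _ ↔ _ := by
          induction t.depth using ENat.recTopCoe with
          | top => simp [eq_comm (a := (⊤ : ℕ∞))]
          | coe d => norm_cast; omega
    · change Force val t (RN n).1 ∨ Force val t (RN n).2 ↔ _
      rw [(ih t).1, (ih t).2]
      induction t.depth using ENat.recTopCoe with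
      | top => simp [eq_comm (a := (⊤ : ℕ∞))]
      | coe d => norm_cast; omega

theorem le_iff_forall_force_rn {t s : Ladder} :
    t ≤ s ↔ ∀ n, (Force val t (RN n).1 → Force val s (RN n).1) ∧
      (Force val t (RN n).2 → Force val s (RN n).2) := by
  refine ⟨fun h n => ⟨force_mono monoVal_val _ h, force_mono monoVal_val _ h⟩, fun h => ?_⟩
  obtain ⟨dt⟩ := t
  obtain ⟨ds⟩ := s
  induction dt using ENat.recTopCoe with
  | top => exact top_le _
  | coe j =>
    have hψ := (force_rn j _).2.1 <| (h j).2 <| (force_rn j _).2.2 le_rfl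
    rcases j with _ | i
    · exact Or.inl (nonpos_iff_eq_zero.1 hψ).symm
    · have hφ := (force_rn i _).1.1 <| (h i).1 <| (force_rn i _).1.2 (Or.inl rfl)
      change ds ≤ ↑(i + 1) at hψ
      refine le_iff.2 ?_
      dsimp only at hφ ⊢
      induction ds using ENat.recTopCoe with
      | top => simp at hψ
      | coe d => norm_cast at hφ hψ ⊢; omega

theorem force_rnEnum_top (k : ℕ) : Force val ⟨⊤⟩ (RNenum k) ↔ k = 1 := by
  match k with
  | 0 | 1 => simp [RNenum, Force]
  | k + 2 =>
    simp only [RNenum]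
    split_ifs <;> simp [force_rn, eq_comm (a := (⊤ : ℕ∞))]

theorem force_rnEnum_coe (k m : ℕ) :
    Force val ⟨m⟩ (RNenum k) ↔ k = 1 ∨ 2 ≤ k ∧ (2 * m + 2 < k ∨ 2 * m = k) := by
  match k with
  | 0 | 1 => simp [RNenum, Force]
  | k + 2 =>
    simp only [RNenum]
    split_ifs <;> simp only [force_rn] <;> norm_cast <;> omega

theorem eq_of_forall_force_rnEnum_iff {j k : ℕ}
    (h : ∀ t, Force val t (RNenum j) ↔ Force val t (RNenum k)) : j = k := by
  have htop := h ⟨⊤⟩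
  have hm (m : ℕ) := h ⟨m⟩
  simp only [force_rnEnum_top, force_rnEnum_coe] at htop hm
  have := hm (j / 2)
  have := hm (k / 2)
  have := hm (j / 2 - 1)
  have := hm (k / 2 - 1)
  omega

theorem force_top_or_bddAbove (p : PropForm Unit) :
    Force val ⟨⊤⟩ p ∨ ∃ N : ℕ, ∀ t, Force val t p → t.depth ≤ N := by
  induction p with
  | var => exact Or.inr ⟨0, fun t (ht : t.depth = 0) => ht.le⟩
  | bot => exact Or.inr ⟨0, fun _ h => h.elim⟩
  | conj p q ihp ihq =>
    rcases ihp with hp | ⟨N, hN⟩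
    · rcases ihq with hq | ⟨N, hN⟩
      · exact Or.inl ⟨hp, hq⟩
      · exact Or.inr ⟨N, fun t ht => hN t ht.2⟩
    · exact Or.inr ⟨N, fun t ht => hN t ht.1⟩
  | disj p q ihp ihq =>
    rcases ihp with hp | ⟨N, hN⟩
    · exact Or.inl (Or.inl hp)
    rcases ihq with hq | ⟨M, hM⟩
    · exact Or.inl (Or.inr hq)
    refine Or.inr ⟨max N M, fun t ht => ?_⟩
    rcases ht with ht | ht
    · exact (hN t ht).trans (by simp)
    · exact (hM t ht).trans (by simp)
  | impl p q _ ihq =>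
    refine or_iff_not_imp_left.2 fun htop => ?_
    obtain ⟨⟨d⟩, hp, hq⟩ : ∃ s, Force val s p ∧ ¬ Force val s q := by
      by_contra hne
      exact htop fun s _ hp => by_contra fun hq => hne ⟨s, hp, hq⟩
    induction d using ENat.recTopCoe with
    | top =>
      obtain ⟨N, hN⟩ := ihq.resolve_left hq
      exact ⟨N, fun t ht => hN t (ht t le_rfl (force_mono monoVal_val p (top_le t) hp))⟩
    | coe m =>
      -- every rung `≥ m + 2` sees the rung `m`, where `p` holds and `q` fails
      refine ⟨m + 1, fun ⟨d⟩ ht => not_lt.1 fun hlt => hq (ht _ (Or.inr ?_) hp)⟩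
      dsimp only at hlt ⊢
      induction d using ENat.recTopCoe with
      | top => exact le_top
      | coe d => norm_cast at hlt ⊢

theorem exists_rnEnum_of_isUpperSet {s : Set Ladder} (hs : IsUpperSet s)
    (htop_or_bdd : ⟨⊤⟩ ∈ s ∨ ∃ N : ℕ, ∀ t ∈ s, t.depth ≤ N) :
    ∃ k, ∀ t, t ∈ s ↔ Force val t (RNenum k) := by
  classical
  rcases htop_or_bdd with htop | ⟨N, hN⟩
  · exact ⟨1, fun t => iff_of_true (hs (top_le t) htop) fun _ _ h => h⟩
  have htop : (⟨⊤⟩ : Ladder) ∉ s := fun h => by simpa using hN _ h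
  by_cases hne : ∃ n : ℕ, (⟨n⟩ : Ladder) ∈ s
  swap
  · push Not at hne
    refine ⟨0, forall_iff.2 ⟨?_, fun m => ?_⟩⟩ <;> simp [RNenum, Force, htop, hne]
  obtain ⟨n, hn, hmax⟩ : ∃ n : ℕ, (⟨n⟩ : Ladder) ∈ s ∧ ∀ m : ℕ, (⟨m⟩ : Ladder) ∈ s → m ≤ n := by
    obtain ⟨n₀, hn₀⟩ := hne
    exact ⟨_, Nat.findGreatest_spec (P := fun n : ℕ => (⟨n⟩ : Ladder) ∈ s)
      (by simpa using hN _ hn₀) hn₀, fun m hm => Nat.le_findGreatest (by simpa using hN _ hm) hm⟩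
  have hmem (m : ℕ) : (⟨m⟩ : Ladder) ∈ s ↔
      m = n ∨ m + 2 ≤ n ∨ (m + 1 = n ∧ (⟨↑(n - 1)⟩ : Ladder) ∈ s) := by
    constructor
    · intro hm
      have := hmax m hm
      rcases (by omega : m = n ∨ m + 2 ≤ n ∨ m + 1 = n) with h | h | h
      exacts [Or.inl h, Or.inr (Or.inl h), Or.inr (Or.inr ⟨h, by rwa [← h, Nat.add_sub_cancel]⟩)]
    · rintro (rfl | h | ⟨h, hm⟩)
      · exact hn
      · exact hs (Or.inr (by dsimp only; exact_mod_cast h)) hn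
      · rwa [← h, Nat.add_sub_cancel] at hm
  refine ⟨if n = 0 ∨ (⟨↑(n - 1)⟩ : Ladder) ∈ s then 2 * n + 3 else 2 * n,
    forall_iff.2 ⟨iff_of_false htop ?_, fun m => ?_⟩⟩
  · rw [force_rnEnum_top]
    split_ifs <;> omega
  · rw [hmem, force_rnEnum_coe]
    by_cases hX : (⟨↑(n - 1)⟩ : Ladder) ∈ s <;>
      simp only [hX, or_true, or_false, and_true, and_false] <;> split_ifs <;> omega

theorem exists_force_iff_rnEnum (p : PropForm Unit) :
    ∃ k, ∀ t, Force val t p ↔ Force val t (RNenum k) :=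
  exists_rnEnum_of_isUpperSet (s := {t | Force val t p})
    (fun _ _ h ht => force_mono monoVal_val p h ht) (force_top_or_bddAbove p)

end Ladder

section Depth

variable {W : Type} [Preorder W] {val : W → Unit → Prop}

theorem force_rn_iff_ladder (hv : MonoVal val) (w : W) (n : ℕ) :
    (Force val w (RN n).1 ↔ Force Ladder.val ⟨rnDepth val w⟩ (RN n).1) ∧
      (Force val w (RN n).2 ↔ Force Ladder.val ⟨rnDepth val w⟩ (RN n).2) :=
  ⟨(force_phi_iff_rnDepth hv w n).trans (Ladder.force_rn n _).1.symm,
    (rnDepth_le_iff w n).symm.trans (Ladder.force_rn n _).2.symm⟩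

theorem monotone_rnDepth (hv : MonoVal val) :
    Monotone fun w : W => (⟨rnDepth val w⟩ : Ladder) := fun w w' h =>
  Ladder.le_iff_forall_force_rn.2 fun n =>
    ⟨fun hφ => (force_rn_iff_ladder hv w' n).1.1 <|
        force_mono hv _ h <| (force_rn_iff_ladder hv w n).1.2 hφ,
      fun hψ => (force_rn_iff_ladder hv w' n).2.1 <|
        force_mono hv _ h <| (force_rn_iff_ladder hv w n).2.2 hψ⟩

theorem exists_rnDepth_eq_of_not_force_phi (hv : MonoVal val) {w : W} {m : ℕ}
    (h : ¬ Force val w (RN m).1) : ∃ w', w ≤ w' ∧ rnDepth val w' = m := by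
  rcases m with _ | i
  · obtain ⟨w', hw', hx⟩ : ∃ w', w ≤ w' ∧ val w' () := by
      by_contra hne
      exact h fun w' hw' hx => hne ⟨w', hw', hx⟩
    exact ⟨w', hw', nonpos_iff_eq_zero.1 ((rnDepth_le_iff w' 0).2 hx)⟩
  · obtain ⟨w', hw', hφ, hψ⟩ :
        ∃ w', w ≤ w' ∧ Force val w' (RN i).1 ∧ ¬ Force val w' (RN i).2 := by
      by_contra hne
      exact h fun w' hw' hφ => by_contra fun hψ => hne ⟨w', hw', hφ, hψ⟩
    refine ⟨w', hw', ?_⟩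
    have hφ' := (force_phi_iff_rnDepth hv w' i).1 hφ
    have hψ' := mt (rnDepth_le_iff w' i).1 hψ
    generalize rnDepth val w' = d at hφ' hψ'
    induction d using ENat.recTopCoe with
    | top => simp [eq_comm (a := (⊤ : ℕ∞))] at hφ'
    | coe d => norm_cast at hφ' hψ' ⊢; omega

theorem exists_rnDepth_eq_of_le (hv : MonoVal val) {w : W} {t : Ladder}
    (h : (⟨rnDepth val w⟩ : Ladder) ≤ t) : ∃ w', w ≤ w' ∧ (⟨rnDepth val w'⟩ : Ladder) = t := by
  obtain ⟨d⟩ := t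
  rcases Ladder.le_iff.1 h with h | (h : d + 2 ≤ rnDepth val w)
  · exact ⟨w, le_rfl, congrArg _ h⟩
  induction d using ENat.recTopCoe with
  | top => exact ⟨w, le_rfl, congrArg _ (top_le_iff.1 (le_self_add.trans h))⟩
  | coe m =>
    obtain ⟨w', hw', hd⟩ := exists_rnDepth_eq_of_not_force_phi hv (m := m) fun hφ => by
      have := (force_phi_iff_rnDepth hv w m).1 hφ
      generalize rnDepth val w = d at h this
      induction d using ENat.recTopCoe with
      | top => simp [eq_comm (a := (⊤ : ℕ∞))] at this
      | coe d => norm_cast at h this; omega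
    exact ⟨w', hw', congrArg _ hd⟩

theorem force_iff_ladder (hv : MonoVal val) (p : PropForm Unit) (w : W) :
    Force val w p ↔ Force Ladder.val ⟨rnDepth val w⟩ p :=
  force_iff_of_boundedMorphism _
    (fun w _ => (rnDepth_le_iff w 0).symm.trans nonpos_iff_eq_zero)
    (monotone_rnDepth hv) (fun _ _ => exists_rnDepth_eq_of_le hv) p w

end Depth

theorem iequiv_iff_ladder {p q : PropForm Unit} :
    IEquiv p q ↔ ∀ t : Ladder, Force Ladder.val t p ↔ Force Ladder.val t q :=
  ⟨fun h => h Ladder Ladder.val Ladder.monoVal_val,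
    fun h _ _ _ hv w =>
      (force_iff_ladder hv p w).trans <| (h _).trans (force_iff_ladder hv q w).symm⟩

/-- Every propositional formula in the single variable `x` is intuitionistically
equivalent to exactly one formula among `⊥`, `⊤`, and the Rieger–Nishimura
formulas `φ_i`, `ψ_i`. -/
theorem stmt_8 (χ : PropForm Unit) : ∃! k : ℕ, IEquiv χ (RNenum k) := by
  obtain ⟨k, hk⟩ := Ladder.exists_force_iff_rnEnum χ
  refine ⟨k, iequiv_iff_ladder.2 hk, fun j hj => ?_⟩
  exact Ladder.eq_of_forall_force_rnEnum_iff fun t =>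
    (iequiv_iff_ladder.1 hj t).symm.trans (hk t)
end

section
/- If at some level of a Kripke model there are r ≥ 4 pairwise incomparable nodes all realizing the same φ-type T, and for every subset S of them of size ≥ 2 there exists a node node(S) whose set of immediate successors is exactly S and which also realizes type T, then at the next level there are at least C(r,2) = r(r−1)/2 pairwise incomparable nodes realizing type T; since r ↦ C(r,2) is strictly increasing for r ≥ 4, iterating gives arbitrarily many nodes of type T at sufficiently high levels. -/
section Aux

variable {W : Type} [PartialOrder W] (Lev : W → ℕ)

lemma aux_same_level_antichain (hLev : ∀ a b : W, a < b → Lev b < Lev a)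
    (c : ℕ) (B : Finset W) (hB : ∀ b ∈ B, Lev b = c) :
    IsAntichain (· ≤ ·) (B : Set W) := by
  intro x hx y hy hne hxy
  have hx' := hB x hx
  have hy' := hB y hy
  have := hLev x y (lt_of_le_of_ne hxy hne)
  omega

lemma aux_step (P : W → Prop)
    (hLev : ∀ a b : W, a < b → Lev b < Lev a)
    (hnode : ∀ (l : ℕ) (S : Finset W), (∀ a ∈ S, Lev a = l ∧ P a) →
      IsAntichain (· ≤ ·) (S : Set W) → 2 ≤ S.card →
      ∃ γ : W, Lev γ = l + 1 ∧ P γ ∧ ∀ a : W, γ ⋖ a ↔ a ∈ S)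
    (l : ℕ) (A : Finset W)
    (hAlev : ∀ a ∈ A, Lev a = l ∧ P a)
    (hAanti : IsAntichain (· ≤ ·) (A : Set W)) :
    ∃ B : Finset W, A.card * (A.card - 1) / 2 ≤ B.card ∧
      (∀ b ∈ B, Lev b = l + 1 ∧ P b) ∧ IsAntichain (· ≤ ·) (B : Set W) := by
  classical
  set T := A.powersetCard 2 with hT
  have key : ∀ S : T, ∃ γ : W, Lev γ = l + 1 ∧ P γ ∧ ∀ a : W, γ ⋖ a ↔ a ∈ S.val := by
    rintro ⟨S, hS⟩
    obtain ⟨hsub, hcard⟩ := Finset.mem_powersetCard.mp hS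
    exact hnode l S (fun a ha => hAlev a (hsub ha)) (hAanti.subset hsub) hcard.ge
  choose f hf1 hf2 hf3 using key
  refine ⟨T.attach.image f, ?_, ?_, ?_⟩
  · have hinj : Function.Injective f := by
      intro s t hst
      apply Subtype.ext
      ext a
      rw [← hf3 s a, hst, hf3 t a]
    rw [Finset.card_image_of_injective _ hinj, Finset.card_attach, hT,
      Finset.card_powersetCard, Nat.choose_two_right]
  · intro b hb
    obtain ⟨s, _, rfl⟩ := Finset.mem_image.mp hb
    exact ⟨hf1 s, hf2 s⟩
  · apply aux_same_level_antichain Lev hLev (l + 1)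
    intro b hb
    obtain ⟨s, _, rfl⟩ := Finset.mem_image.mp hb
    exact hf1 s

end Aux

/-- In a graded Kripke-model-like poset (levels strictly decrease upward), if at
level `m` there are `r ≥ 4` pairwise incomparable nodes all realizing the type
`T` (here abstracted as a predicate `P`), and every antichain `S` of nodes of a
common level with `|S| ≥ 2` realizing `P` admits a node `node S` at the next
level, realizing `P`, whose immediate successors are exactly the elements of
`S`, then at level `m + 1` there are at least `r(r-1)/2` pairwise incomparable
nodes realizing `P`; iterating, there are arbitrarily large antichains of nodes
realizing `P` at sufficiently high levels. -/
theorem stmt_12 {W : Type} [PartialOrder W] (Lev : W → ℕ) (P : W → Prop)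
    (hLev : ∀ a b : W, a < b → Lev b < Lev a)
    (hnode : ∀ (l : ℕ) (S : Finset W), (∀ a ∈ S, Lev a = l ∧ P a) →
      IsAntichain (· ≤ ·) (S : Set W) → 2 ≤ S.card →
      ∃ γ : W, Lev γ = l + 1 ∧ P γ ∧ ∀ a : W, γ ⋖ a ↔ a ∈ S)
    (m : ℕ) (A : Finset W) (hA4 : 4 ≤ A.card)
    (hAlev : ∀ a ∈ A, Lev a = m ∧ P a)
    (hAanti : IsAntichain (· ≤ ·) (A : Set W)) :
    (∃ B : Finset W, A.card * (A.card - 1) / 2 ≤ B.card ∧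
      (∀ b ∈ B, Lev b = m + 1 ∧ P b) ∧ IsAntichain (· ≤ ·) (B : Set W)) ∧
    ∀ r : ℕ, ∃ (m' : ℕ) (B : Finset W), r ≤ B.card ∧
      (∀ b ∈ B, Lev b = m' ∧ P b) ∧ IsAntichain (· ≤ ·) (B : Set W) := by
  constructor
  · exact aux_step Lev P hLev hnode m A hAlev hAanti
  · have grow : ∀ k : ℕ, ∃ (m' : ℕ) (B : Finset W), 4 + k ≤ B.card ∧
        (∀ b ∈ B, Lev b = m' ∧ P b) ∧ IsAntichain (· ≤ ·) (B : Set W) := by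
      intro k
      induction k with
      | zero => exact ⟨m, A, hA4, hAlev, hAanti⟩
      | succ k ih =>
        obtain ⟨m', B, hBcard, hBlev, hBanti⟩ := ih
        obtain ⟨C, hCcard, hClev, hCanti⟩ := aux_step Lev P hLev hnode m' B hBlev hBanti
        refine ⟨m' + 1, C, ?_, hClev, hCanti⟩
        have h1 : B.card + 1 ≤ B.card * (B.card - 1) / 2 := by
          have h2 : 2 * (B.card + 1) ≤ B.card * (B.card - 1) := by
            obtain ⟨d, hd⟩ : ∃ d, B.card = d + 4 := ⟨B.card - 4, by omega⟩
            rw [hd, show d + 4 - 1 = d + 3 by omega]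
            nlinarith
          omega
        omega
    intro r
    obtain ⟨m', B, hB, h2, h3⟩ := grow r
    exact ⟨m', B, by omega, h2, h3⟩
end
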